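/- Let w ∈ [0,1] and ŵ_N = (1/N) Σ_{k=1}^N 1{A_k} where 1{A_1},...,1{A_N} are i.i.d. Bernoulli(w) indicators. Then for any δ ∈ (0,1), with probability at least 1 − δ, |w − ŵ_N| ≤ sqrt(2 ŵ_N (1 − ŵ_N) log(2/δ)/N) + 7 log(2/δ)/(3(N−1)). -/

import Mathlib

open MeasureTheory ProbabilityTheory Real

/-!
For a possible value `a > w` of the sample mean, Chernoff's bound gives
`P(ŵ_N ≥ a) ≤ exp(-N kl(a, w))`, and `kl(a, w) ≥ (a - w)² / (2 (a (1 - a) + (a - w)))`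
bounds the divergence by the *empirical* variance `a (1 - a)`. If `a` violates the claimed
bound then this exceeds `log(2/δ)/N`, so its tail has probability at most `δ/2`. The sample mean
takes only the values `m/N`, so all deviations above `w` lie in the tail of the smallest
deviating value; deviations below `w` are deviations above `1 - w` of the indicators `1 - Z_k`.
-/

noncomputable def klBernoulli (a w : ℝ) : ℝ :=
  a * log (a / w) + (1 - a) * log ((1 - a) / (1 - w))

lemma klBernoulli_self {a : ℝ} (ha0 : 0 < a) (ha1 : a < 1) : klBernoulli a a = 0 := by
  simp [klBernoulli, div_self ha0.ne', div_self (sub_pos.2 ha1).ne']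

lemma klBernoulli_one {w : ℝ} : klBernoulli 1 w = -log w := by
  simp [klBernoulli]

lemma hasDerivAt_klBernoulli_right {a s : ℝ} (ha0 : 0 < a) (ha1 : a < 1) (hs0 : 0 < s)
    (hs1 : s < 1) :
    HasDerivAt (klBernoulli a) ((s - a) / (s * (1 - s))) s := by
  have h1s : (1 - s) ≠ 0 := (sub_pos.2 hs1).ne'
  have hlog : HasDerivAt (fun s => a * (log a - log s) + (1 - a) * (log (1 - a) - log (1 - s)))
      (a * (0 - s⁻¹) + (1 - a) * (0 - (1 - s)⁻¹ * (0 - 1))) s :=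
    (((hasDerivAt_const s _).sub (hasDerivAt_log hs0.ne')).const_mul a).add
      (((hasDerivAt_const s _).sub
        ((hasDerivAt_log h1s).comp s ((hasDerivAt_const s 1).sub (hasDerivAt_id s)))).const_mul _)
  refine (hlog.congr_of_eventuallyEq ?_).congr_deriv ?_
  · filter_upwards [lt_mem_nhds hs0, gt_mem_nhds hs1] with x hx0 hx1
    rw [klBernoulli, log_div ha0.ne' hx0.ne', log_div (sub_pos.2 ha1).ne' (sub_pos.2 hx1).ne']
  · field_simp
    ring

lemma sq_div_le_klBernoulli {a w : ℝ} (hw : 0 < w) (hwa : w < a) (ha : a ≤ 1) :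
    (a - w) ^ 2 / (2 * (a * (1 - a) + (a - w))) ≤ klBernoulli a w := by
  rcases ha.eq_or_lt with rfl | ha1
  · rw [klBernoulli_one, sub_self, mul_zero, zero_add, pow_two,
      mul_div_mul_right _ _ (sub_pos.2 hwa).ne']
    linarith [log_le_sub_one_of_pos hw]
  set D := a * (1 - a) + (a - w)
  set g : ℝ → ℝ := fun s => klBernoulli a s - (a - s) ^ 2 / (2 * D)
  have hD : 0 < D := by nlinarith
  have hg' : ∀ s ∈ Set.Icc w a, HasDerivAt g ((s - a) / (s * (1 - s)) + (a - s) / D) s := by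
    intro s hs
    have hs0 : 0 < s := hw.trans_le hs.1
    have hs1 : s < 1 := hs.2.trans_lt ha1
    have := (hasDerivAt_klBernoulli_right (hw.trans hwa) ha1 hs0 hs1).sub
      ((((hasDerivAt_const s a).sub (hasDerivAt_id s)).pow 2).div_const (2 * D))
    have hs1' : (1 - s) ≠ 0 := (sub_pos.2 hs1).ne'
    exact this.congr_deriv (by simp only [Pi.sub_apply, id]; field_simp; ring)
  -- `s (1 - s) ≤ D` on `[w, a]`, which makes `g` antitone there
  have hanti : AntitoneOn g (Set.Icc w a) := by
    refine antitoneOn_of_hasDerivWithinAt_nonpos (convex_Icc w a)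
      (fun s hs => (hg' s hs).continuousAt.continuousWithinAt)
      (fun s hs => (hg' s (interior_subset hs)).hasDerivWithinAt) fun s hs => ?_
    rw [interior_Icc] at hs
    have hs0 : 0 < s := hw.trans hs.1
    have hs1 : 0 < 1 - s := by linarith [hs.2]
    have hsD : s * (1 - s) ≤ D := by nlinarith [hs.1, hs.2]
    rw [div_add_div _ _ (by positivity) hD.ne']
    exact div_nonpos_of_nonpos_of_nonneg (by nlinarith [hs.2]) (by positivity)
  have := hanti (Set.left_mem_Icc.2 hwa.le) (Set.right_mem_Icc.2 hwa.le) hwa.le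
  simpa [g, klBernoulli_self (hw.trans hwa) ha1] using this

lemma lt_sq_div_of_sqrt_add_lt {v β x : ℝ} (hv : 0 ≤ v) (hβ : 0 < β)
    (h : sqrt (2 * v * β) + 2 * β < x) : β < x ^ 2 / (2 * (v + x)) := by
  have hs : sqrt (2 * v * β) ^ 2 = 2 * v * β := sq_sqrt (by positivity)
  have hs0 := sqrt_nonneg (2 * v * β)
  rw [lt_div_iff₀ (by nlinarith)]
  nlinarith

lemma lt_klBernoulli_of_sqrt_add_lt {a w β : ℝ} (hw : 0 < w) (ha : a ≤ 1) (hβ : 0 < β)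
    (h : sqrt (2 * a * (1 - a) * β) + 2 * β < a - w) : β < klBernoulli a w := by
  have hwa : w < a := by linarith [sqrt_nonneg (2 * a * (1 - a) * β)]
  have hv : 0 ≤ a * (1 - a) := mul_nonneg (hw.trans hwa).le (sub_nonneg.2 ha)
  rw [mul_assoc 2 a] at h
  exact (lt_sq_div_of_sqrt_add_lt hv hβ h).trans_le (sq_div_le_klBernoulli hw hwa ha)

section Bernoulli

variable {Ω ι : Type*} [MeasurableSpace Ω] {P : Measure Ω} [IsProbabilityMeasure P] {w : ℝ}

lemma exp_mul_eq_of_eq_zero_or_eq_one {x : ℝ} (hx : x = 0 ∨ x = 1) (t : ℝ) :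
    exp (t * x) = 1 + (exp t - 1) * x := by
  rcases hx with rfl | rfl <;> simp

lemma integrable_of_eq_zero_or_eq_one {X : Ω → ℝ} (hX : Measurable X)
    (h01 : ∀ ω, X ω = 0 ∨ X ω = 1) : Integrable X P :=
  .of_bound hX.aestronglyMeasurable 1 <| ae_of_all _ fun ω => by
    rcases h01 ω with h | h <;> simp [h]

lemma mgf_of_eq_zero_or_eq_one {X : Ω → ℝ} (hX : Measurable X) (h01 : ∀ ω, X ω = 0 ∨ X ω = 1)
    (hmean : ∫ ω, X ω ∂P = w) (t : ℝ) : mgf X P t = 1 + (exp t - 1) * w := by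
  simp only [mgf, exp_mul_eq_of_eq_zero_or_eq_one (h01 _) t]
  rw [integral_add (integrable_const 1) ((integrable_of_eq_zero_or_eq_one hX h01).const_mul _),
    integral_const_mul, hmean]
  simp

lemma integrable_exp_mul_of_eq_zero_or_eq_one {X : Ω → ℝ} (hX : Measurable X)
    (h01 : ∀ ω, X ω = 0 ∨ X ω = 1) (t : ℝ) : Integrable (fun ω => exp (t * X ω)) P := by
  simp only [exp_mul_eq_of_eq_zero_or_eq_one (h01 _) t]
  exact (integrable_const 1).add ((integrable_of_eq_zero_or_eq_one hX h01).const_mul _)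

variable [Fintype ι] {Z : ι → Ω → ℝ}

lemma sum_eq_card_filter_eq_one {x : ι → ℝ} (h01 : ∀ k, x k = 0 ∨ x k = 1) :
    ∑ k, x k = (Finset.univ.filter fun k : ι => x k = 1).card := by
  rw [Finset.natCast_card_filter]
  exact Finset.sum_congr rfl fun k _ => by rcases h01 k with h | h <;> simp [h]

lemma measureReal_sum_ge_le_exp_mul_pow (hmeas : ∀ k, Measurable (Z k))
    (h01 : ∀ k ω, Z k ω = 0 ∨ Z k ω = 1) (hiid : iIndepFun Z P)
    (hmean : ∀ k, ∫ ω, Z k ω ∂P = w) (ε : ℝ) {t : ℝ} (ht : 0 ≤ t) :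
    P.real {ω | ε ≤ ∑ k, Z k ω} ≤ exp (-t * ε) * (1 + (exp t - 1) * w) ^ Fintype.card ι := by
  have hsum : (fun ω => ∑ k, Z k ω) = ∑ k, Z k := (Finset.sum_fn _ _).symm
  have hmgf : mgf (fun ω => ∑ k, Z k ω) P t = (1 + (exp t - 1) * w) ^ Fintype.card ι := by
    rw [hsum, hiid.mgf_sum hmeas]
    simp [mgf_of_eq_zero_or_eq_one (hmeas _) (h01 _) (hmean _)]
  have hint : Integrable (fun ω => exp (t * ∑ k, Z k ω)) P := by
    simpa using hiid.integrable_exp_mul_sum hmeas (s := Finset.univ)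
      fun k _ => integrable_exp_mul_of_eq_zero_or_eq_one (hmeas k) (h01 k) t
  rw [← hmgf]
  exact measure_ge_le_exp_mul_mgf ε ht hint

lemma measureReal_sum_ge_le_exp_neg_klBernoulli (hmeas : ∀ k, Measurable (Z k))
    (h01 : ∀ k ω, Z k ω = 0 ∨ Z k ω = 1) (hiid : iIndepFun Z P)
    (hmean : ∀ k, ∫ ω, Z k ω ∂P = w) (hw : 0 < w) {a : ℝ} (hwa : w < a) (ha : a ≤ 1) :
    P.real {ω | a * Fintype.card ι ≤ ∑ k, Z k ω} ≤
      exp (-Fintype.card ι * klBernoulli a w) := by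
  set n := Fintype.card ι
  have chernoff {t : ℝ} (ht : 0 ≤ t) :=
    measureReal_sum_ge_le_exp_mul_pow hmeas h01 hiid hmean (a * n) ht
  rcases ha.eq_or_lt with rfl | ha1
  · -- the optimal `t` escapes to `∞`
    have hlim : Filter.Tendsto (fun t => (w + (1 - w) * exp (-t)) ^ n) Filter.atTop
        (nhds (w ^ n)) := by
      simpa using ((tendsto_exp_neg_atTop_nhds_zero.const_mul (1 - w)).const_add w).pow n
    rw [klBernoulli_one, neg_mul_neg, exp_nat_mul, exp_log hw]
    refine ge_of_tendsto hlim
      (Filter.eventually_atTop.2 ⟨0, fun t ht => (chernoff ht).trans_eq ?_⟩)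
    rw [one_mul, show -t * n = n * -t by ring, exp_nat_mul, ← mul_pow, mul_add, mul_one,
      ← mul_assoc, mul_sub, ← exp_add]
    simp only [neg_add_cancel, exp_zero]
    ring
  · have h1a : 0 < 1 - a := sub_pos.2 ha1
    have h1w : 0 < 1 - w := by linarith
    set L₁ := log (a / w)
    set L₂ := log ((1 - a) / (1 - w))
    have hL₁ : 0 ≤ L₁ := log_nonneg ((one_le_div hw).2 hwa.le)
    have hL₂ : L₂ ≤ 0 := log_nonpos (by positivity) ((div_le_one h1w).2 (by linarith))
    have hmgf : 1 + (exp (L₁ - L₂) - 1) * w = exp (-L₂) := by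
      rw [exp_sub, exp_neg, exp_log (div_pos (hw.trans hwa) hw), exp_log (div_pos h1a h1w)]
      field_simp
      ring
    refine (chernoff (sub_nonneg.2 (hL₂.trans hL₁))).trans_eq ?_
    rw [hmgf, ← exp_nat_mul, ← exp_add]
    congr 1
    simp only [klBernoulli, L₁, L₂, n]
    ring


lemma measure_sum_ge_eq_zero_of_integral_eq_zero (hmeas : ∀ k, Measurable (Z k))
    (h01 : ∀ k ω, Z k ω = 0 ∨ Z k ω = 1) (hmean : ∀ k, ∫ ω, Z k ω ∂P = 0) {ε : ℝ} (hε : 0 < ε) :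
    P {ω | ε ≤ ∑ k, Z k ω} = 0 := by
  have hzero : ∀ᵐ ω ∂P, ∀ k, Z k ω = 0 := ae_all_iff.2 fun k =>
    (integral_eq_zero_iff_of_nonneg (fun ω => by rcases h01 k ω with h | h <;> simp [h])
      (integrable_of_eq_zero_or_eq_one (hmeas k) (h01 k))).1 (hmean k)
  rw [measure_eq_zero_iff_ae_notMem]
  filter_upwards [hzero] with ω hω
  simp [hω, hε]

variable [Nonempty ι]

lemma measure_sum_ge_le_exp_neg_of_sqrt_add_lt (hmeas : ∀ k, Measurable (Z k))
    (h01 : ∀ k ω, Z k ω = 0 ∨ Z k ω = 1) (hiid : iIndepFun Z P)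
    (hmean : ∀ k, ∫ ω, Z k ω ∂P = w) (hw : 0 ≤ w) {a β : ℝ} (ha : a ≤ 1) (hβ : 0 < β)
    (hdev : sqrt (2 * a * (1 - a) * β) + 2 * β < a - w) :
    P {ω | a * Fintype.card ι ≤ ∑ k, Z k ω} ≤ ENNReal.ofReal (exp (-Fintype.card ι * β)) := by
  have hwa : w < a := by linarith [sqrt_nonneg (2 * a * (1 - a) * β)]
  rcases hw.eq_or_lt with rfl | hw
  · rw [measure_sum_ge_eq_zero_of_integral_eq_zero hmeas h01 hmean
      (mul_pos hwa (Nat.cast_pos.2 Fintype.card_pos))]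
    exact zero_le
  rw [← ofReal_measureReal]
  refine ENNReal.ofReal_le_ofReal ((measureReal_sum_ge_le_exp_neg_klBernoulli hmeas h01 hiid
    hmean hw hwa ha).trans (exp_le_exp.2 ?_))
  exact mul_le_mul_of_nonpos_left (lt_klBernoulli_of_sqrt_add_lt hw ha hβ hdev).le
    (neg_nonpos.2 (Nat.cast_nonneg _))


lemma measure_upper_deviation_le (hmeas : ∀ k, Measurable (Z k))
    (h01 : ∀ k ω, Z k ω = 0 ∨ Z k ω = 1) (hiid : iIndepFun Z P)
    (hmean : ∀ k, ∫ ω, Z k ω ∂P = w) (hw : 0 ≤ w) {β : ℝ} (hβ : 0 < β) :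
    P {ω | w ≤ 1 / (Fintype.card ι : ℝ) * ∑ k, Z k ω ∧
        sqrt (2 * (1 / (Fintype.card ι : ℝ) * ∑ k, Z k ω)
          * (1 - 1 / (Fintype.card ι : ℝ) * ∑ k, Z k ω) * β) + 2 * β
          < 1 / (Fintype.card ι : ℝ) * ∑ k, Z k ω - w} ≤
      ENNReal.ofReal (exp (-Fintype.card ι * β)) := by
  classical
  set n := Fintype.card ι
  have hn : (0 : ℝ) < n := Nat.cast_pos.2 Fintype.card_pos
  set values := (Finset.range (n + 1)).image fun m : ℕ => (m : ℝ) / n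
  have hmem : ∀ ω, 1 / (n : ℝ) * ∑ k, Z k ω ∈ values := fun ω => by
    refine Finset.mem_image.2 ⟨_, Finset.mem_range_succ_iff.2
      (Finset.card_filter_le Finset.univ fun k => Z k ω = 1), ?_⟩
    rw [sum_eq_card_filter_eq_one fun k => h01 k ω, one_div_mul_eq_div]
  have hle_one : ∀ a ∈ values, a ≤ 1 := fun a ha => by
    obtain ⟨m, hm, rfl⟩ := Finset.mem_image.1 ha
    exact (div_le_one hn).2 (Nat.cast_le.2 (Finset.mem_range_succ_iff.1 hm))
  -- the deviation event lies in the upper tail of the smallest deviating possible mean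
  set deviating := values.filter fun a => w ≤ a ∧ sqrt (2 * a * (1 - a) * β) + 2 * β < a - w
  rcases deviating.eq_empty_or_nonempty with hempty | hne
  · refine (measure_mono (t := ∅) fun ω hω => ?_).trans (by simp)
    have : 1 / (n : ℝ) * ∑ k, Z k ω ∈ deviating := Finset.mem_filter.2 ⟨hmem ω, hω⟩
    simp [hempty] at this
  obtain ⟨hmin, hmin_dev⟩ := Finset.mem_filter.1 (deviating.min'_mem hne)
  refine (measure_mono fun ω hω => ?_).trans
    (measure_sum_ge_le_exp_neg_of_sqrt_add_lt hmeas h01 hiid hmean hw (hle_one _ hmin) hβ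
      hmin_dev.2)
  exact (le_div_iff₀ hn).1 ((deviating.min'_le _ (Finset.mem_filter.2 ⟨hmem ω, hω⟩)).trans_eq
    (one_div_mul_eq_div _ _))

lemma measure_lower_deviation_le (hmeas : ∀ k, Measurable (Z k))
    (h01 : ∀ k ω, Z k ω = 0 ∨ Z k ω = 1) (hiid : iIndepFun Z P)
    (hmean : ∀ k, ∫ ω, Z k ω ∂P = w) (hw : w ≤ 1) {β : ℝ} (hβ : 0 < β) :
    P {ω | 1 / (Fintype.card ι : ℝ) * ∑ k, Z k ω ≤ w ∧
        sqrt (2 * (1 / (Fintype.card ι : ℝ) * ∑ k, Z k ω)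
          * (1 - 1 / (Fintype.card ι : ℝ) * ∑ k, Z k ω) * β) + 2 * β
          < w - 1 / (Fintype.card ι : ℝ) * ∑ k, Z k ω} ≤
      ENNReal.ofReal (exp (-Fintype.card ι * β)) := by
  -- the upper deviation of the complementary indicators `1 - Z k`, whose mean is `1 - w`
  have hupper := measure_upper_deviation_le (P := P) (Z := fun k ω => 1 - Z k ω) (w := 1 - w)
    (fun k => measurable_const.sub (hmeas k))
    (fun k ω => (h01 k ω).symm.imp (fun h => by simp [h]) fun h => by simp [h])
    (hiid.comp (fun _ x => 1 - x) fun _ => measurable_const.sub measurable_id)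
    (fun k => by simp [integral_sub (integrable_const 1)
      (integrable_of_eq_zero_or_eq_one (hmeas k) (h01 k)), hmean k])
    (sub_nonneg.2 hw) hβ
  refine (measure_mono fun ω hω => ?_).trans hupper
  have hn : (Fintype.card ι : ℝ) ≠ 0 := Nat.cast_ne_zero.2 Fintype.card_ne_zero
  set m := 1 / (Fintype.card ι : ℝ) * ∑ k, Z k ω
  have hmean_sub : 1 / (Fintype.card ι : ℝ) * ∑ k, (1 - Z k ω) = 1 - m := by
    rw [Finset.sum_sub_distrib, mul_sub, Finset.sum_const, Finset.card_univ, nsmul_one,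
      one_div_mul_cancel hn]
  obtain ⟨hle, hdev⟩ := hω
  rw [Set.mem_ofPred_eq, hmean_sub, show 2 * (1 - m) * (1 - (1 - m)) = 2 * m * (1 - m) by ring]
  exact ⟨by linarith, by linarith⟩

lemma measure_deviation_le (hmeas : ∀ k, Measurable (Z k))
    (h01 : ∀ k ω, Z k ω = 0 ∨ Z k ω = 1) (hiid : iIndepFun Z P)
    (hmean : ∀ k, ∫ ω, Z k ω ∂P = w) (hw0 : 0 ≤ w) (hw1 : w ≤ 1) {β : ℝ} (hβ : 0 < β) :
    P {ω | sqrt (2 * (1 / (Fintype.card ι : ℝ) * ∑ k, Z k ω)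
          * (1 - 1 / (Fintype.card ι : ℝ) * ∑ k, Z k ω) * β) + 2 * β
          < |w - 1 / (Fintype.card ι : ℝ) * ∑ k, Z k ω|} ≤
      ENNReal.ofReal (2 * exp (-Fintype.card ι * β)) := by
  refine (measure_mono fun ω hω => ?_).trans ((measure_union_le _ _).trans
    ((add_le_add (measure_upper_deviation_le hmeas h01 hiid hmean hw0 hβ)
      (measure_lower_deviation_le hmeas h01 hiid hmean hw1 hβ)).trans_eq ?_))
  · rcases le_total w (1 / (Fintype.card ι : ℝ) * ∑ k, Z k ω) with h | h
    · rw [Set.mem_ofPred_eq, abs_of_nonpos (sub_nonpos.2 h), neg_sub] at hω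
      exact Or.inl ⟨h, hω⟩
    · rw [Set.mem_ofPred_eq, abs_of_nonneg (sub_nonneg.2 h)] at hω
      exact Or.inr ⟨h, hω⟩
  · rw [← ENNReal.ofReal_add (exp_pos _).le (exp_pos _).le, two_mul]

end Bernoulli

lemma ofReal_one_sub_le_of_measure_compl_le {Ω : Type*} [MeasurableSpace Ω] {P : Measure Ω}
    [IsProbabilityMeasure P] {s : Set Ω} {δ : ℝ} (hδ : 0 ≤ δ) (h : P sᶜ ≤ ENNReal.ofReal δ) :
    ENNReal.ofReal (1 - δ) ≤ P s := by
  rw [ENNReal.ofReal_sub 1 hδ, ENNReal.ofReal_one, tsub_le_iff_right, ← measure_univ (μ := P)]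
  exact (measure_univ_le_add_compl s).trans (add_le_add le_rfl h)

/-- empirical Bernstein (Maurer–Pontil) bound for i.i.d. Bernoulli(w)
indicators: with probability at least `1 - δ`,
`|w - ŵ_N| ≤ sqrt(2 ŵ_N (1-ŵ_N) log(2/δ)/N) + 7 log(2/δ)/(3(N-1))`. -/
theorem stmt4 {N : ℕ} (hN : 2 ≤ N)
    {Ω : Type*} [MeasurableSpace Ω] (P : Measure Ω) [IsProbabilityMeasure P]
    (Z : Fin N → Ω → ℝ)
    (hmeas : ∀ k, Measurable (Z k))
    (hber : ∀ k, ∀ ω, Z k ω = 0 ∨ Z k ω = 1)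
    (hiid : iIndepFun Z P)
    (w : ℝ) (hw0 : 0 ≤ w) (hw1 : w ≤ 1)
    (hmean : ∀ k, ∫ ω, Z k ω ∂P = w)
    (δ : ℝ) (hδ : δ ∈ Set.Ioo (0 : ℝ) 1) :
    ENNReal.ofReal (1 - δ) ≤
      P {ω | |w - (1 / (N : ℝ)) * ∑ k, Z k ω| ≤
        Real.sqrt (2 * ((1 / (N : ℝ)) * ∑ k, Z k ω)
            * (1 - (1 / (N : ℝ)) * ∑ k, Z k ω) * Real.log (2 / δ) / N)
          + 7 * Real.log (2 / δ) / (3 * (N - 1))} := by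
  obtain ⟨hδ0, hδ1⟩ := hδ
  have : NeZero N := ⟨by omega⟩
  have hN' : (2 : ℝ) ≤ N := by exact_mod_cast hN
  set L := log (2 / δ)
  have hL : 0 < L := log_pos ((lt_div_iff₀ hδ0).2 (by linarith))
  have hβ : 0 < L / N := div_pos hL (by linarith)
  have hdev := measure_deviation_le hmeas hber hiid hmean hw0 hw1 hβ
  have hδ_eq : 2 * exp (-N * (L / N)) = δ := by
    rw [neg_mul, mul_div_cancel₀ _ (by positivity), exp_neg, exp_log (by positivity)]
    field_simp
  rw [Fintype.card_fin, hδ_eq] at hdev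
  have hc : 2 * (L / N) ≤ 7 * L / (3 * (N - 1)) := by
    rw [← mul_div_assoc, div_le_div_iff₀ (by positivity) (by linarith)]
    nlinarith
  refine ofReal_one_sub_le_of_measure_compl_le hδ0.le ((measure_mono fun ω hω => ?_).trans hdev)
  simp only [Set.mem_compl_iff, Set.mem_ofPred_eq, not_le] at hω ⊢
  rw [mul_div_assoc] at hω
  linarith
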